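/- arXiv:2510.18290 — 6 statements merged into one kernel-verified Lean document; each statement's English description precedes it below -/
import Mathlib

section
/- Let (X,d) be a nonempty proper (Heine–Borel) metric space, let x₀ ∈ X, and let (Sₙ)ₙ be a sequence of nonempty closed subsets of X such that the sequence of distances (infDist(x₀, Sₙ))ₙ is bounded. Then there exist a strictly increasing map n : ℕ → ℕ and a nonempty closed subset S ⊆ X such that for every y ∈ X, infDist(y, S_{n(k)}) → infDist(y, S) as k → ∞. -/
/-!
Distance functions to nonempty sets are 1-Lipschitz, so a sequence of them that is bounded at one
point is bounded at every point. Extracting a subsequence that converges on a countable dense set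
(Tychonoff) and using equicontinuity, it converges pointwise to some `g`. Properness then lets
nearest points of the sets accumulate: for each `y` they yield a zero `x` of `g` with
`dist y x = g y`, while `g y ≤ g x + dist y x` always holds. Hence `g` is the distance function
of its zero set, which is the limit set.
-/

open Metric Filter Topology

theorem exists_subseq_tendsto_of_forall_abs_le {ι : Type*} [Countable ι] (u : ℕ → ι → ℝ)
    (b : ι → ℝ) (hu : ∀ n i, |u n i| ≤ b i) :
    ∃ φ : ℕ → ℕ, StrictMono φ ∧ ∃ L : ι → ℝ, Tendsto (u ∘ φ) atTop (𝓝 L) := by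
  obtain ⟨L, -, φ, hφ, hL⟩ := (isCompact_univ_pi fun i => isCompact_Icc).isSeqCompact
    (x := u) fun n i _ => abs_le.1 (hu n i)
  exact ⟨φ, hφ, L, hL⟩

theorem cauchySeq_of_equicontinuousAt_of_dense {β X α : Type*} [SemilatticeSup β] [Nonempty β]
    [TopologicalSpace X] [PseudoMetricSpace α] {F : β → X → α} {y : X}
    (hF : EquicontinuousAt F y) {s : Set X} (hs : Dense s)
    (h : ∀ x ∈ s, CauchySeq fun n => F n x) : CauchySeq fun n => F n y := by
  rw [Metric.cauchySeq_iff]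
  intro ε hε
  obtain ⟨t, ht, hFt⟩ := (equicontinuousAt_iff_right.1 hF (ε / 3) (by positivity)).exists_mem
  obtain ⟨x, hxs, hxt⟩ := hs.inter_nhds_nonempty ht
  obtain ⟨N, hN⟩ := Metric.cauchySeq_iff.1 (h x hxs) (ε / 3) (by positivity)
  refine ⟨N, fun m hm n hn => ?_⟩
  calc dist (F m y) (F n y) ≤ dist (F m y) (F m x) + dist (F m x) (F n x) + dist (F n x) (F n y) :=
        dist_triangle4 _ _ _ _
    _ < ε / 3 + ε / 3 + ε / 3 := by
        gcongr
        · exact hFt x hxt m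
        · exact hN m hm n hn
        · rw [dist_comm]; exact hFt x hxt n
    _ = ε := by ring

theorem exists_subseq_tendsto_of_lipschitzWith {X : Type*} [PseudoMetricSpace X]
    [TopologicalSpace.SeparableSpace X] {K : NNReal} (F : ℕ → X → ℝ)
    (hF : ∀ n, LipschitzWith K (F n)) (x₀ : X) {C : ℝ} (hC : ∀ n, |F n x₀| ≤ C) :
    ∃ φ : ℕ → ℕ, StrictMono φ ∧ ∃ g : X → ℝ, ∀ y, Tendsto (fun k => F (φ k) y) atTop (𝓝 (g y)) := by
  have : Nonempty X := ⟨x₀⟩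
  set D := TopologicalSpace.denseSeq X
  have hbound : ∀ n y, |F n y| ≤ C + K * dist y x₀ := fun n y => by
    linarith [hC n, abs_sub_abs_le_abs_sub (F n y) (F n x₀), (hF n).dist_le_mul y x₀,
      Real.dist_eq (F n y) (F n x₀)]
  obtain ⟨φ, hφ, L, hL⟩ := exists_subseq_tendsto_of_forall_abs_le (fun n i => F n (D i))
    (fun i => C + K * dist (D i) x₀) fun n i => hbound n (D i)
  have hcauchy : ∀ y, CauchySeq fun k => F (φ k) y := fun y =>
    cauchySeq_of_equicontinuousAt_of_dense
      ((LipschitzWith.uniformEquicontinuous _ K fun k => hF (φ k)).equicontinuous y)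
      (TopologicalSpace.denseRange_denseSeq X) (by
        rintro _ ⟨i, rfl⟩
        exact (tendsto_pi_nhds.1 hL i).cauchySeq)
  choose g hg using fun y => cauchySeq_tendsto_of_complete (hcauchy y)
  exact ⟨φ, hφ, g, hg⟩

section LimitOfInfDist

variable {X : Type*} [PseudoMetricSpace X] {T : ℕ → Set X} {g : X → ℝ}

theorem lipschitzWith_one_of_tendsto_infDist
    (hg : ∀ y, Tendsto (fun k => infDist y (T k)) atTop (𝓝 (g y))) : LipschitzWith 1 g :=
  LipschitzWith.of_le_add fun x y =>
    le_of_tendsto_of_tendsto' (hg x) ((hg y).add_const _) fun _ => infDist_le_infDist_add_dist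

theorem exists_eq_zero_dist_eq_of_tendsto_infDist [ProperSpace X] (hne : ∀ k, (T k).Nonempty)
    (hcl : ∀ k, IsClosed (T k)) (hg : ∀ y, Tendsto (fun k => infDist y (T k)) atTop (𝓝 (g y)))
    (y : X) : ∃ x, g x = 0 ∧ dist y x = g y := by
  choose z hzT hz using fun k => (hcl k).exists_infDist_eq_dist (hne k) y
  obtain ⟨M, hM⟩ := (hg y).bddAbove_range
  have hzM : ∀ k, z k ∈ closedBall y M := fun k => by
    rw [mem_closedBall, dist_comm, ← hz k]
    exact hM ⟨k, rfl⟩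
  obtain ⟨x, -, ψ, hψ, hzx⟩ := tendsto_subseq_of_bounded isBounded_closedBall hzM
  have hdist : Tendsto (fun j => dist y (z (ψ j))) atTop (𝓝 (g y)) := by
    simpa only [Function.comp_def, hz] using (hg y).comp hψ.tendsto_atTop
  have hgx : Tendsto (fun j => infDist x (T (ψ j))) atTop (𝓝 0) :=
    squeeze_zero (fun _ => infDist_nonneg) (fun j => infDist_le_dist_of_mem (hzT (ψ j)))
      (tendsto_iff_dist_tendsto_zero.1 hzx |>.congr fun _ => dist_comm _ _)
  exact ⟨x, tendsto_nhds_unique ((hg x).comp hψ.tendsto_atTop) hgx,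
    tendsto_nhds_unique (tendsto_const_nhds.dist hzx) hdist⟩

theorem infDist_setOf_eq_zero_of_tendsto_infDist [ProperSpace X] (hne : ∀ k, (T k).Nonempty)
    (hcl : ∀ k, IsClosed (T k)) (hg : ∀ y, Tendsto (fun k => infDist y (T k)) atTop (𝓝 (g y)))
    (y : X) : infDist y {x | g x = 0} = g y := by
  obtain ⟨x, hx, hxy⟩ := exists_eq_zero_dist_eq_of_tendsto_infDist hne hcl hg y
  have hx : x ∈ {x | g x = 0} := hx
  refine le_antisymm ((infDist_le_dist_of_mem hx).trans hxy.le) ((le_infDist ⟨x, hx⟩).2 ?_)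
  intro z (hz : g z = 0)
  have h := (lipschitzWith_one_of_tendsto_infDist hg).dist_le_mul y z
  rw [Real.dist_eq, hz, sub_zero, NNReal.coe_one, one_mul] at h
  exact (le_abs_self _).trans h

end LimitOfInfDist

theorem stmt0_general {X : Type*} [MetricSpace X] [ProperSpace X]
    (x₀ : X) (S : ℕ → Set X)
    (hne : ∀ n, (S n).Nonempty) (hcl : ∀ n, IsClosed (S n))
    (hbd : ∃ C : ℝ, ∀ n, Metric.infDist x₀ (S n) ≤ C) :
    ∃ n : ℕ → ℕ, StrictMono n ∧ ∃ S' : Set X, S'.Nonempty ∧ IsClosed S' ∧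
      ∀ y : X, Filter.Tendsto (fun k => Metric.infDist y (S (n k)))
        Filter.atTop (nhds (Metric.infDist y S')) := by
  obtain ⟨C, hC⟩ := hbd
  obtain ⟨φ, hφ, g, hg⟩ := exists_subseq_tendsto_of_lipschitzWith (fun n y => infDist y (S n))
    (fun n => lipschitz_infDist_pt (S n)) x₀ fun n => (abs_of_nonneg infDist_nonneg).trans_le (hC n)
  obtain ⟨x, hx, -⟩ :=
    exists_eq_zero_dist_eq_of_tendsto_infDist (fun k => hne (φ k)) (fun k => hcl (φ k)) hg x₀
  refine ⟨φ, hφ, {x | g x = 0}, ⟨x, hx⟩,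
    isClosed_eq (lipschitzWith_one_of_tendsto_infDist hg).continuous continuous_const, fun y => ?_⟩
  rw [infDist_setOf_eq_zero_of_tendsto_infDist (fun k => hne (φ k)) (fun k => hcl (φ k)) hg y]
  exact hg y

/-- paper's Lemma A.1, generalizing Dümbgen–Samworth–Schuhmacher
Lemma 4.3. In a nonempty proper (Heine–Borel) metric space, from any sequence of
nonempty closed sets with bounded distance to a fixed point one can extract a
subsequence whose distance functions converge pointwise to the distance function of a
nonempty closed set. -/
theorem stmt0 {X : Type*} [MetricSpace X] [ProperSpace X] [Nonempty X]
    (x₀ : X) (S : ℕ → Set X)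
    (hne : ∀ n, (S n).Nonempty) (hcl : ∀ n, IsClosed (S n))
    (hbd : ∃ C : ℝ, ∀ n, Metric.infDist x₀ (S n) ≤ C) :
    ∃ n : ℕ → ℕ, StrictMono n ∧ ∃ S' : Set X, S'.Nonempty ∧ IsClosed S' ∧
      ∀ y : X, Filter.Tendsto (fun k => Metric.infDist y (S (n k)))
        Filter.atTop (nhds (Metric.infDist y S')) :=
  stmt0_general x₀ S hne hcl hbd
end

section
/- Let (X,d) be a metric space, let ψ : X → [−∞,∞) be bounded above, let t ∈ [0,1], let M > 0, and let x₀, x₁, x_t ∈ X be points such that for all y₀, y₁ ∈ X there exists y_t ∈ X with d(x_t, y_t) ≤ (1−t)·d(x₀,y₀) + t·d(x₁,y₁) and ψ(y_t) ≥ (1−t)·ψ(y₀) + t·ψ(y₁) (with the convention that the right side is −∞ if either term is −∞). Then ψ^(M)(x_t) ≥ (1−t)·ψ^(M)(x₀) + t·ψ^(M)(x₁). -/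
/-- The Pasch–Hausdorff / Lipschitz regularization (M-envelope) of
`ψ : X → EReal`: `ψ^(M)(x) = sup_y (ψ(y) − M·d(x,y))`. -/
noncomputable def lipEnvelope {X : Type*} [MetricSpace X]
    (ψ : X → EReal) (M : ℝ) (x : X) : EReal :=
  ⨆ y : X, ψ y - ((M * dist x y : ℝ) : EReal)

/-- The convex combination `(1−t)·a + t·b` in `[−∞,∞)`, with the convention that it
equals `−∞` as soon as one of the two terms is `−∞`. -/
noncomputable def erealCombo (t : ℝ) (a b : EReal) : EReal :=
  if a = ⊥ ∨ b = ⊥ then ⊥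
  else ((1 - t : ℝ) : EReal) * a + ((t : ℝ) : EReal) * b

/-- concavity part of the paper's Lemma A.9. If for all `y₀, y₁`
there is `y_t` with `d(x_t,y_t) ≤ (1−t)d(x₀,y₀) + t·d(x₁,y₁)` and
`ψ(y_t) ≥ (1−t)ψ(y₀) + t·ψ(y₁)`, then the same concavity inequality holds for the
envelope `ψ^(M)` at `x_t, x₀, x₁`. -/
theorem stmt4 {X : Type*} [MetricSpace X]
    (ψ : X → EReal) (htop : ∀ x, ψ x ≠ ⊤)
    (hbdd : ∃ L : ℝ, ∀ x, ψ x ≤ (L : EReal))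
    (t : ℝ) (ht0 : 0 ≤ t) (ht1 : t ≤ 1)
    (M : ℝ) (hM : 0 < M)
    (x₀ x₁ xt : X)
    (hgeo : ∀ y₀ y₁ : X, ∃ yt : X,
      dist xt yt ≤ (1 - t) * dist x₀ y₀ + t * dist x₁ y₁ ∧
      erealCombo t (ψ y₀) (ψ y₁) ≤ ψ yt) :
    erealCombo t (lipEnvelope ψ M x₀) (lipEnvelope ψ M x₁) ≤ lipEnvelope ψ M xt := by
  obtain ⟨L, hL⟩ := hbdd
  have hEtop : ∀ x : X, lipEnvelope ψ M x ≠ ⊤ := by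
    intro x
    have hle : lipEnvelope ψ M x ≤ (L : EReal) := by
      apply iSup_le; intro y
      calc ψ y - ((M * dist x y : ℝ) : EReal)
          ≤ (L : EReal) - ((0 : ℝ) : EReal) := by
            exact EReal.sub_le_sub (hL y)
              (by exact_mod_cast mul_nonneg hM.le dist_nonneg)
        _ = (L : EReal) := by norm_num
    exact fun h => (EReal.coe_ne_top L) (top_le_iff.mp (h ▸ hle))
  rw [erealCombo]
  split_ifs with h
  · exact bot_le
  push_neg at h
  obtain ⟨h₀, h₁⟩ := h
  set a := (lipEnvelope ψ M x₀).toReal with ha'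
  set b := (lipEnvelope ψ M x₁).toReal with hb'
  have ha : lipEnvelope ψ M x₀ = (a : EReal) := (EReal.coe_toReal (hEtop x₀) h₀).symm
  have hb : lipEnvelope ψ M x₁ = (b : EReal) := (EReal.coe_toReal (hEtop x₁) h₁).symm
  rw [ha, hb]
  have hgoal : (((1 - t) * a + t * b : ℝ) : EReal) = ((1 - t : ℝ) : EReal) * (a : EReal) + ((t : ℝ) : EReal) * (b : EReal) := by
    push_cast; ring
  rw [← hgoal]
  set c : ℝ := (1 - t) * a + t * b with hc
  have key : ∀ ε : ℝ, 0 < ε → ((c - ε : ℝ) : EReal) ≤ lipEnvelope ψ M xt := by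
    intro ε hε
    have h0' : ((a - ε : ℝ) : EReal) < lipEnvelope ψ M x₀ := by
      rw [ha]; exact_mod_cast sub_lt_self a hε
    have h1' : ((b - ε : ℝ) : EReal) < lipEnvelope ψ M x₁ := by
      rw [hb]; exact_mod_cast sub_lt_self b hε
    rw [lipEnvelope, lt_iSup_iff] at h0' h1'
    obtain ⟨y₀, hy₀⟩ := h0'
    obtain ⟨y₁, hy₁⟩ := h1'
    have hψ0 : ψ y₀ ≠ ⊥ := by
      intro hbot; rw [hbot, EReal.bot_sub] at hy₀; exact absurd hy₀ (by simp)
    have hψ1 : ψ y₁ ≠ ⊥ := by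
      intro hbot; rw [hbot, EReal.bot_sub] at hy₁; exact absurd hy₁ (by simp)
    set p₀ := (ψ y₀).toReal with hp₀'
    set p₁ := (ψ y₁).toReal with hp₁'
    have hp₀ : ψ y₀ = (p₀ : EReal) := (EReal.coe_toReal (htop y₀) hψ0).symm
    have hp₁ : ψ y₁ = (p₁ : EReal) := (EReal.coe_toReal (htop y₁) hψ1).symm
    rw [hp₀] at hy₀; rw [hp₁] at hy₁
    rw [← EReal.coe_sub] at hy₀ hy₁
    rw [EReal.coe_lt_coe_iff] at hy₀ hy₁
    obtain ⟨yt, hd, hψ⟩ := hgeo y₀ y₁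
    have hcombo : erealCombo t (ψ y₀) (ψ y₁) = (((1 - t) * p₀ + t * p₁ : ℝ) : EReal) := by
      rw [erealCombo, if_neg (by rw [hp₀, hp₁]; simp), hp₀, hp₁]
      push_cast; ring
    rw [hcombo] at hψ
    have hψtb : ψ yt ≠ ⊥ := fun hbot => by rw [hbot, le_bot_iff] at hψ; exact EReal.coe_ne_bot _ hψ
    set q := (ψ yt).toReal with hq'
    have hq : ψ yt = (q : EReal) := (EReal.coe_toReal (htop yt) hψtb).symm
    rw [hq, EReal.coe_le_coe_iff] at hψ
    calc ((c - ε : ℝ) : EReal)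
        ≤ ((q - M * dist xt yt : ℝ) : EReal) := by
          rw [EReal.coe_le_coe_iff, hc]
          have h1 := mul_le_mul_of_nonneg_left hd hM.le
          have h2 := mul_le_mul_of_nonneg_left hy₀.le (sub_nonneg.mpr ht1)
          have h3 := mul_le_mul_of_nonneg_left hy₁.le ht0
          nlinarith [h1, h2, h3, hψ]
      _ = ψ yt - ((M * dist xt yt : ℝ) : EReal) := by rw [hq, EReal.coe_sub]
      _ ≤ lipEnvelope ψ M xt := le_iSup (fun y => ψ y - ((M * dist xt y : ℝ) : EReal)) yt
  by_contra hcon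
  push_neg at hcon
  have hEb : lipEnvelope ψ M xt ≠ ⊥ := by
    intro hbot
    have := key 1 one_pos
    rw [hbot, le_bot_iff] at this
    exact EReal.coe_ne_bot _ this
  set e := (lipEnvelope ψ M xt).toReal with he'
  have he : lipEnvelope ψ M xt = (e : EReal) := (EReal.coe_toReal (hEtop xt) hEb).symm
  rw [he, EReal.coe_lt_coe_iff] at hcon
  have := key ((c - e) / 2) (by linarith)
  rw [he, EReal.coe_le_coe_iff] at this
  linarith
end

section
/- Let (X,𝒜) be a measurable space carrying a measure ν and a probability measure Q. Let Φ be a nonempty collection of measurable functions φ : X → [−∞,∞) such that: (i) ∫ e^φ dν < ∞ for every φ ∈ Φ; (ii) φ + c ∈ Φ for every φ ∈ Φ and every c ∈ ℝ; (iii) the positive part of each φ ∈ Φ is Q-integrable, so that ∫ φ dQ is well-defined in [−∞,∞). Define L(φ,Q) := ∫ φ dQ − ∫ e^φ dν + 1. If L(Q) := sup_{φ∈Φ} L(φ,Q) is finite and is attained by some ψ ∈ Φ, then ∫ e^ψ dν = 1. -/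
open MeasureTheory
open scoped ENNReal

/-- The positive part of `a : EReal`, as an extended nonnegative real. -/
noncomputable def erealPos (a : EReal) : ℝ≥0∞ :=
  if a = ⊤ then ⊤ else ENNReal.ofReal a.toReal

/-- The integral `∫ φ dQ ∈ [−∞,∞]` of an `EReal`-valued function, defined as the
difference of the lower integrals of its positive and negative parts. -/
noncomputable def erealIntegral {X : Type*} [MeasurableSpace X] (Q : Measure X)
    (φ : X → EReal) : EReal :=
  ((∫⁻ x, erealPos (φ x) ∂Q : ℝ≥0∞) : EReal) -
    ((∫⁻ x, erealPos (-(φ x)) ∂Q : ℝ≥0∞) : EReal)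

/-- The log-concave-projection functional `L(φ,Q) = ∫ φ dQ − ∫ e^φ dν + 1`. -/
noncomputable def LLfun {X : Type*} [MeasurableSpace X] (ν Q : Measure X)
    (φ : X → EReal) : EReal :=
  erealIntegral Q φ - ((∫⁻ x, EReal.exp (φ x) ∂ν : ℝ≥0∞) : EReal) + 1

@[simp] lemma erealPos_coe (x : ℝ) : erealPos (x : EReal) = ENNReal.ofReal x := by
  simp [erealPos]

@[simp] lemma erealPos_bot : erealPos (⊥ : EReal) = 0 := by simp [erealPos]
@[simp] lemma erealPos_top : erealPos (⊤ : EReal) = ⊤ := by simp [erealPos]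

lemma erealPos_mono : Monotone erealPos := by
  intro a b h
  rcases eq_or_ne b ⊤ with rfl | hb
  · simp
  · have ha : a ≠ ⊤ := fun h' => hb (top_le_iff.mp (h' ▸ h))
    simp only [erealPos, if_neg ha, if_neg hb]
    rcases eq_or_ne a ⊥ with rfl | ha'
    · simp
    · exact ENNReal.ofReal_le_ofReal (EReal.toReal_le_toReal h ha' hb)

lemma measurable_erealPos : Measurable erealPos := by
  unfold erealPos
  exact Measurable.ite (by simpa using measurableSet_singleton (⊤ : EReal))
    measurable_const (ENNReal.measurable_ofReal.comp measurable_ereal_toReal)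

lemma ofReal_shift (x c : ℝ) (hc : 0 ≤ c) :
    ENNReal.ofReal (x + c) + ENNReal.ofReal (-x)
      = ENNReal.ofReal x + ENNReal.ofReal (-(x + c)) + ENNReal.ofReal c := by
  rcases le_total 0 x with hx | hx
  · rw [ENNReal.ofReal_eq_zero.mpr (neg_nonpos.mpr hx),
      ENNReal.ofReal_eq_zero.mpr (neg_nonpos.mpr (by linarith : (0:ℝ) ≤ x + c)),
      add_zero, add_zero, ← ENNReal.ofReal_add hx hc]
  · rcases le_total 0 (x + c) with hxc | hxc
    · rw [ENNReal.ofReal_eq_zero.mpr hx, ENNReal.ofReal_eq_zero.mpr (neg_nonpos.mpr hxc),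
        zero_add, zero_add, ← ENNReal.ofReal_add hxc (neg_nonneg.mpr hx)]
      congr 1; ring
    · rw [ENNReal.ofReal_eq_zero.mpr hxc, ENNReal.ofReal_eq_zero.mpr hx, zero_add, zero_add,
        ← ENNReal.ofReal_add (neg_nonneg.mpr hxc) hc]
      congr 1; ring

lemma erealPos_shift (a : EReal) (ha : a ≠ ⊤) (c : ℝ) (hc : 0 ≤ c) :
    erealPos (a + c) + erealPos (-a)
      = erealPos a + erealPos (-(a + c)) + ENNReal.ofReal c := by
  induction a with
  | bot => simp
  | coe x =>
      rw [← EReal.coe_add, ← EReal.coe_neg, ← EReal.coe_neg, erealPos_coe, erealPos_coe,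
        erealPos_coe, erealPos_coe]
      exact ofReal_shift x c hc
  | top => exact absurd rfl ha

lemma lint_shift {X : Type*} [MeasurableSpace X] (Q : Measure X) [IsProbabilityMeasure Q]
    (ψ φ : X → EReal) (hmψ : Measurable ψ) (hmφ : Measurable φ)
    (hnt : ∀ x, ψ x ≠ ⊤) (c : ℝ) (hc : 0 ≤ c) (hrel : ∀ x, φ x = ψ x + c) :
    ∫⁻ x, erealPos (φ x) ∂Q + ∫⁻ x, erealPos (-(ψ x)) ∂Q
      = ∫⁻ x, erealPos (ψ x) ∂Q + ∫⁻ x, erealPos (-(φ x)) ∂Q + ENNReal.ofReal c := by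
  have m1 : Measurable fun x => erealPos (φ x) := measurable_erealPos.comp hmφ
  have m2 : Measurable fun x => erealPos (-(ψ x)) := measurable_erealPos.comp hmψ.neg
  have m3 : Measurable fun x => erealPos (ψ x) := measurable_erealPos.comp hmψ
  have m4 : Measurable fun x => erealPos (-(φ x)) := measurable_erealPos.comp hmφ.neg
  rw [← lintegral_add_left m1, ← lintegral_add_left m3]
  calc ∫⁻ x, erealPos (φ x) + erealPos (-(ψ x)) ∂Q
        = ∫⁻ x, (erealPos (ψ x) + erealPos (-(φ x))) + ENNReal.ofReal c ∂Q := by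
          refine lintegral_congr fun x => ?_
          rw [hrel x]
          exact erealPos_shift (ψ x) (hnt x) c hc
      _ = ∫⁻ x, (erealPos (ψ x) + erealPos (-(φ x))) ∂Q + ENNReal.ofReal c * Q Set.univ := by
          rw [lintegral_add_right _ measurable_const, lintegral_const]
      _ = ∫⁻ x, (erealPos (ψ x) + erealPos (-(φ x))) ∂Q + ENNReal.ofReal c := by
          rw [measure_univ, mul_one]

lemma coe_ennreal_fin (p : ℝ≥0∞) (hp : p ≠ ⊤) : ((p : EReal)) = ((p.toReal : ℝ) : EReal) := by
  conv_lhs => rw [← ENNReal.ofReal_toReal hp]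
  rw [EReal.coe_ennreal_ofReal, max_eq_left ENNReal.toReal_nonneg]

lemma LL_val (P N E : ℝ≥0∞) (hP : P ≠ ⊤) (hN : N ≠ ⊤) (hE : E ≠ ⊤) :
    ((P : EReal) - N) - E + 1 = ((P.toReal - N.toReal - E.toReal + 1 : ℝ) : EReal) := by
  rw [coe_ennreal_fin P hP, coe_ennreal_fin N hN, coe_ennreal_fin E hE]
  norm_cast

lemma real_key (m : ℝ) (hm : 0 ≤ m) (h : ∀ c : ℝ, c ≤ m * (Real.exp c - 1)) : m = 1 := by
  have hpos : 0 < m := by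
    rcases hm.lt_or_eq with h' | h'
    · exact h'
    · exfalso; have := h 1; rw [← h'] at this; norm_num at this
  have key2 : ∀ c : ℝ, c * (1 - m * Real.exp c) ≤ 0 := by
    intro c
    have h1 := Real.add_one_le_exp (-c)
    have h2 : Real.exp (-c) * Real.exp c = 1 := by rw [← Real.exp_add]; simp
    have h4 : Real.exp c - 1 ≤ c * Real.exp c := by
      nlinarith [mul_le_mul_of_nonneg_right h1 (Real.exp_pos c).le]
    have h5 : m * (Real.exp c - 1) ≤ m * (c * Real.exp c) :=
      mul_le_mul_of_nonneg_left h4 hm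
    nlinarith [h c]
  set t := Real.log m / 2 with ht
  have hexp : m * Real.exp (-t) = Real.exp t := by
    rw [← Real.exp_log hpos, ← Real.exp_add]
    congr 1; rw [ht]; ring
  have hk := key2 (-t)
  rw [hexp] at hk
  have ht1 := Real.add_one_le_exp t
  have ht2 := Real.add_one_le_exp (-t)
  have hmt : Real.exp t * Real.exp (-t) = 1 := by rw [← Real.exp_add]; simp
  have hle : t ≤ 0 := by nlinarith
  have hge : 0 ≤ t := by nlinarith [Real.exp_pos t, Real.exp_pos (-t)]
  have ht0 : Real.log m = 0 := by
    have := le_antisymm hle hge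
    rw [ht] at this; linarith
  rw [← Real.exp_log hpos, ht0, Real.exp_zero]

/-- paper's Lemma 3.2, abstract form. If the supremum
`L(Q) = sup_{φ∈Φ} L(φ,Q)` is finite and attained by `ψ ∈ Φ`, where `Φ` is a class of
measurable `[−∞,∞)`-valued functions closed under addition of real constants, with
`∫ e^φ dν < ∞` and `Q`-integrable positive parts, then `∫ e^ψ dν = 1`. -/
theorem stmt6 {X : Type*} [MeasurableSpace X] (ν Q : Measure X)
    [IsProbabilityMeasure Q]
    (Φ : Set (X → EReal)) (hΦne : Φ.Nonempty)
    (hmeas : ∀ φ ∈ Φ, Measurable φ)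
    (hnetop : ∀ φ ∈ Φ, ∀ x, φ x ≠ ⊤)
    (hexpfin : ∀ φ ∈ Φ, (∫⁻ x, EReal.exp (φ x) ∂ν) < ⊤)
    (hshift : ∀ φ ∈ Φ, ∀ c : ℝ, (fun x => φ x + (c : EReal)) ∈ Φ)
    (hposint : ∀ φ ∈ Φ, (∫⁻ x, erealPos (φ x) ∂Q) < ⊤)
    (hfin : (⨆ φ ∈ Φ, LLfun ν Q φ) ≠ ⊥ ∧ (⨆ φ ∈ Φ, LLfun ν Q φ) ≠ ⊤)
    (ψ : X → EReal) (hψ : ψ ∈ Φ)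
    (hatt : LLfun ν Q ψ = ⨆ φ ∈ Φ, LLfun ν Q φ) :
    (∫⁻ x, EReal.exp (ψ x) ∂ν) = 1 := by
  set A := ∫⁻ x, erealPos (ψ x) ∂Q with hAdef
  set B := ∫⁻ x, erealPos (-(ψ x)) ∂Q with hBdef
  set M := ∫⁻ x, EReal.exp (ψ x) ∂ν with hMdef
  have hA : A ≠ ⊤ := (hposint ψ hψ).ne
  have hM : M ≠ ⊤ := (hexpfin ψ hψ).ne
  have hLL : LLfun ν Q ψ = ((A : EReal) - B) - M + 1 := rfl
  have hB : B ≠ ⊤ := by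
    intro hBtop
    apply hfin.1
    rw [← hatt, hLL, hBtop, EReal.coe_ennreal_top]
    simp [sub_eq_add_neg]
  have key : ∀ c : ℝ, c ≤ M.toReal * (Real.exp c - 1) := by
    intro c
    set φc : X → EReal := fun x => ψ x + (c : EReal) with hφdef
    have hφm : φc ∈ Φ := hshift ψ hψ c
    set P := ∫⁻ x, erealPos (φc x) ∂Q with hPdef
    set N := ∫⁻ x, erealPos (-(φc x)) ∂Q with hNdef
    have hP : P ≠ ⊤ := (hposint _ hφm).ne
    obtain ⟨hN, heq⟩ : N ≠ ⊤ ∧ P.toReal - N.toReal = A.toReal - B.toReal + c := by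
      rcases le_total 0 c with hc | hc
      · have heq1 := lint_shift Q ψ φc (hmeas ψ hψ) (hmeas _ hφm) (hnetop ψ hψ) c hc
          (fun x => rfl)
        rw [← hAdef, ← hBdef, ← hPdef, ← hNdef] at heq1
        have hN : N ≠ ⊤ := by
          have hle : N ≤ B := lintegral_mono fun x =>
            erealPos_mono (EReal.neg_le_neg_iff.mpr
              (le_add_of_nonneg_right (EReal.coe_nonneg.mpr hc)))
          exact (lt_of_le_of_lt hle hB.lt_top).ne
        have htr := congrArg ENNReal.toReal heq1
        rw [ENNReal.toReal_add hP hB, ENNReal.toReal_add (ENNReal.add_ne_top.mpr ⟨hA, hN⟩)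
          ENNReal.ofReal_ne_top, ENNReal.toReal_add hA hN,
          ENNReal.toReal_ofReal hc] at htr
        exact ⟨hN, by linarith⟩
      · have hrel : ∀ x, ψ x = φc x + ((-c : ℝ) : EReal) := by
          intro x
          show ψ x = (ψ x + (c : EReal)) + ((-c : ℝ) : EReal)
          rw [add_assoc, ← EReal.coe_add, add_neg_cancel, EReal.coe_zero, add_zero]
        have heq1 := lint_shift Q φc ψ (hmeas _ hφm) (hmeas ψ hψ)
          (hnetop _ hφm) (-c) (by linarith) hrel
        rw [← hAdef, ← hBdef, ← hPdef, ← hNdef] at heq1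
        -- heq1 : A + N = P + B + ofReal (-c)
        have hN : N ≠ ⊤ := by
          intro hNt
          rw [hNt, add_top] at heq1
          exact (ENNReal.add_ne_top.mpr ⟨ENNReal.add_ne_top.mpr ⟨hP, hB⟩,
            ENNReal.ofReal_ne_top⟩) heq1.symm
        have htr := congrArg ENNReal.toReal heq1
        rw [ENNReal.toReal_add hA hN, ENNReal.toReal_add (ENNReal.add_ne_top.mpr ⟨hP, hB⟩)
          ENNReal.ofReal_ne_top, ENNReal.toReal_add hP hB,
          ENNReal.toReal_ofReal (by linarith)] at htr
        exact ⟨hN, by linarith⟩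
    have hEexp : (∫⁻ x, EReal.exp (φc x) ∂ν) = M * ENNReal.ofReal (Real.exp c) := by
      have : ∀ x, EReal.exp (φc x) = EReal.exp (ψ x) * ENNReal.ofReal (Real.exp c) := by
        intro x
        show EReal.exp (ψ x + (c : EReal)) = _
        rw [EReal.exp_add, EReal.exp_coe]
      simp_rw [this]
      exact lintegral_mul_const' _ _ ENNReal.ofReal_ne_top
    have hEfin : M * ENNReal.ofReal (Real.exp c) ≠ ⊤ :=
      ENNReal.mul_ne_top hM ENNReal.ofReal_ne_top
    have hLLφ : LLfun ν Q φc
        = ((P.toReal - N.toReal - M.toReal * Real.exp c + 1 : ℝ) : EReal) := by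
      have h0 : LLfun ν Q φc
          = ((P : EReal) - N) - ((M * ENNReal.ofReal (Real.exp c) : ℝ≥0∞) : EReal) + 1 := by
        show ((P : EReal) - N) - ((∫⁻ x, EReal.exp (φc x) ∂ν : ℝ≥0∞) : EReal) + 1 = _
        rw [hEexp]
      rw [h0, LL_val P N _ hP hN hEfin, ENNReal.toReal_mul,
        ENNReal.toReal_ofReal (Real.exp_nonneg c)]
    have hLLψ : LLfun ν Q ψ = ((A.toReal - B.toReal - M.toReal + 1 : ℝ) : EReal) := by
      rw [hLL, LL_val A B M hA hB hM]
    have hle : LLfun ν Q φc ≤ LLfun ν Q ψ := by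
      rw [hatt]
      exact le_iSup₂ (f := fun φ (_ : φ ∈ Φ) => LLfun ν Q φ) φc hφm
    rw [hLLφ, hLLψ, EReal.coe_le_coe_iff] at hle
    nlinarith [heq]
  have hm1 : M.toReal = 1 := real_key M.toReal ENNReal.toReal_nonneg key
  exact (ENNReal.toReal_eq_one_iff M).mp hm1
end

section
/- Let k ≥ 3 be an integer, let v ∈ ℝ, and let f₁, …, f_k : [0,∞) → ℝ be bounded continuous functions with f₁(0) = ⋯ = f_k(0) = v. Then lim_{h→0⁺} Σ_{l=1}^{k} ∫₀^∞ [ φ_N(y) / (1 + (k−2)·Φ_N(−y)) ] · f_l(h·y) dy = v · (k/(k−2)) · log(k/2). -/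
open scoped Real

/-- The standard normal probability density `φ_N(y) = (2π)^{-1/2} e^{-y²/2}`. -/
noncomputable def stdNormalPDF (y : ℝ) : ℝ :=
  (Real.sqrt (2 * π))⁻¹ * Real.exp (-(y ^ 2) / 2)

/-- The standard normal cumulative distribution function
`Φ_N(t) = ∫_{-∞}^t φ_N(y) dy`. -/
noncomputable def stdNormalCDF (t : ℝ) : ℝ :=
  ∫ y in Set.Iic t, stdNormalPDF y

open MeasureTheory Set Filter Topology ProbabilityTheory

/-!
The kernel `φ_N(y) / (1 + c Φ_N(-y))` is the derivative of `-c⁻¹ log (1 + c Φ_N(-y))`, which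
tends to `0` at infinity; since `Φ_N(0) = 1/2`, its integral over `(0, ∞)` is `c⁻¹ log (1 + c/2)`.
By dominated convergence each leg's integral tends to `v` times this as `h → 0⁺`, and the `k`
legs with `c = k - 2` add up to `v · k/(k-2) · log(k/2)`.
-/

theorem stdNormalPDF_eq_gaussianPDFReal : stdNormalPDF = gaussianPDFReal 0 1 := by
  ext y
  simp [stdNormalPDF, gaussianPDFReal]

theorem stdNormalPDF_nonneg (y : ℝ) : 0 ≤ stdNormalPDF y := by
  rw [stdNormalPDF_eq_gaussianPDFReal]; exact gaussianPDFReal_nonneg 0 1 y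

theorem stdNormalPDF_neg (y : ℝ) : stdNormalPDF (-y) = stdNormalPDF y := by
  simp [stdNormalPDF]

theorem continuous_stdNormalPDF : Continuous stdNormalPDF := by
  unfold stdNormalPDF; fun_prop

theorem integrable_stdNormalPDF : Integrable stdNormalPDF := by
  rw [stdNormalPDF_eq_gaussianPDFReal]; exact integrable_gaussianPDFReal 0 1

theorem integral_stdNormalPDF : ∫ y, stdNormalPDF y = 1 := by
  rw [stdNormalPDF_eq_gaussianPDFReal]; exact integral_gaussianPDFReal_eq_one 0 one_ne_zero

theorem hasDerivAt_integral_Iic {E : Type*} [NormedAddCommGroup E] [NormedSpace ℝ E]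
    [CompleteSpace E] {f : ℝ → E} (hf : Integrable f) {t : ℝ} (ht : ContinuousAt f t) :
    HasDerivAt (fun u => ∫ y in Iic u, f y) (f t) t := by
  have hsplit :
      (fun u => ∫ y in Iic u, f y) = fun u => (∫ y in Iic 0, f y) + ∫ y in 0..u, f y := by
    ext u
    rw [← intervalIntegral.integral_Iic_sub_Iic hf.integrableOn hf.integrableOn, add_sub_cancel]
  rw [hsplit]
  exact (intervalIntegral.integral_hasDerivAt_right hf.intervalIntegrable
    hf.aestronglyMeasurable.stronglyMeasurableAtFilter ht).const_add _

theorem integral_Iic_zero_of_even {f : ℝ → ℝ} (hf : Integrable f) (heven : ∀ x, f (-x) = f x) :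
    ∫ x in Iic 0, f x = (∫ x, f x) / 2 := by
  have hsum := intervalIntegral.integral_Iic_add_Ioi hf.integrableOn hf.integrableOn (b := 0)
  have hsymm : ∫ x in Ioi 0, f x = ∫ x in Iic 0, f x := by
    simpa [heven] using (integral_comp_neg_Iic (0 : ℝ) f).symm
  linarith

theorem stdNormalCDF_nonneg (t : ℝ) : 0 ≤ stdNormalCDF t :=
  setIntegral_nonneg measurableSet_Iic fun y _ => stdNormalPDF_nonneg y

theorem stdNormalCDF_zero : stdNormalCDF 0 = 1 / 2 := by
  rw [stdNormalCDF, integral_Iic_zero_of_even integrable_stdNormalPDF stdNormalPDF_neg,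
    integral_stdNormalPDF]

theorem hasDerivAt_stdNormalCDF (t : ℝ) : HasDerivAt stdNormalCDF (stdNormalPDF t) t :=
  hasDerivAt_integral_Iic integrable_stdNormalPDF continuous_stdNormalPDF.continuousAt

theorem hasDerivAt_stdNormalCDF_neg (y : ℝ) :
    HasDerivAt (fun y => stdNormalCDF (-y)) (-stdNormalPDF y) y := by
  have h := (hasDerivAt_stdNormalCDF (-y)).comp y (hasDerivAt_neg y)
  rw [mul_neg_one, stdNormalPDF_neg] at h
  exact h

theorem tendsto_stdNormalCDF_neg_atTop : Tendsto (fun y => stdNormalCDF (-y)) atTop (𝓝 0) :=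
  tendsto_integral_Iic_zero tendsto_neg_atTop_atBot

noncomputable def spiderKernel (c y : ℝ) : ℝ :=
  stdNormalPDF y / (1 + c * stdNormalCDF (-y))

section spiderKernel

variable {c : ℝ}

theorem one_le_spiderKernel_denom (hc : 0 ≤ c) (y : ℝ) : 1 ≤ 1 + c * stdNormalCDF (-y) :=
  le_add_of_nonneg_right (mul_nonneg hc (stdNormalCDF_nonneg _))

theorem spiderKernel_nonneg (hc : 0 ≤ c) (y : ℝ) : 0 ≤ spiderKernel c y :=
  div_nonneg (stdNormalPDF_nonneg y) (zero_le_one.trans (one_le_spiderKernel_denom hc y))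

theorem hasDerivAt_neg_inv_mul_log_spiderKernel_denom (hc : 0 < c) (y : ℝ) :
    HasDerivAt (fun y => -(c⁻¹ * Real.log (1 + c * stdNormalCDF (-y)))) (spiderKernel c y) y := by
  have hdenom : 1 + c * stdNormalCDF (-y) ≠ 0 :=
    (zero_lt_one.trans_le (one_le_spiderKernel_denom hc.le y)).ne'
  refine ((((hasDerivAt_stdNormalCDF_neg y).const_mul c).const_add 1).log hdenom
    |>.const_mul c⁻¹).neg.congr_deriv ?_
  rw [spiderKernel]
  field_simp

theorem tendsto_neg_inv_mul_log_spiderKernel_denom :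
    Tendsto (fun y => -(c⁻¹ * Real.log (1 + c * stdNormalCDF (-y)))) atTop (𝓝 0) := by
  have hdenom : Tendsto (fun y => 1 + c * stdNormalCDF (-y)) atTop (𝓝 1) := by
    simpa using (tendsto_stdNormalCDF_neg_atTop.const_mul c).const_add 1
  simpa using ((Real.continuousAt_log one_ne_zero).tendsto.comp hdenom).const_mul c⁻¹ |>.neg

theorem integrableOn_spiderKernel (hc : 0 < c) : IntegrableOn (spiderKernel c) (Ioi 0) :=
  integrableOn_Ioi_deriv_of_nonneg'
    (fun y _ => hasDerivAt_neg_inv_mul_log_spiderKernel_denom hc y)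
    (fun y _ => spiderKernel_nonneg hc.le y) tendsto_neg_inv_mul_log_spiderKernel_denom

theorem integral_spiderKernel (hc : 0 < c) :
    ∫ y in Ioi 0, spiderKernel c y = c⁻¹ * Real.log (1 + c / 2) := by
  rw [integral_Ioi_of_hasDerivAt_of_nonneg'
    (fun y _ => hasDerivAt_neg_inv_mul_log_spiderKernel_denom hc y)
    (fun y _ => spiderKernel_nonneg hc.le y) tendsto_neg_inv_mul_log_spiderKernel_denom]
  simp [stdNormalCDF_zero, div_eq_mul_inv]

end spiderKernel

theorem tendsto_setIntegral_mul_comp_mul_nhdsGT_zero {K g : ℝ → ℝ} (hK : IntegrableOn K (Ioi 0))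
    (hg : ContinuousOn g (Ici 0)) {B : ℝ} (hB : ∀ x ∈ Ici (0 : ℝ), |g x| ≤ B) :
    Tendsto (fun h => ∫ y in Ioi 0, K y * g (h * y)) (𝓝[>] 0)
      (𝓝 ((∫ y in Ioi 0, K y) * g 0)) := by
  rw [← integral_mul_const]
  refine tendsto_integral_filter_of_dominated_convergence (fun y => ‖K y‖ * B) ?_ ?_
    (hK.norm.mul_const B) ?_
  · filter_upwards [self_mem_nhdsWithin] with h (hh : 0 < h)
    exact hK.aestronglyMeasurable.mul <| (hg.comp (continuous_const_mul h).continuousOn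
      fun y (hy : 0 < y) => (mul_pos hh hy).le).aestronglyMeasurable measurableSet_Ioi
  · filter_upwards [self_mem_nhdsWithin] with h (hh : 0 < h)
    filter_upwards [ae_restrict_mem measurableSet_Ioi] with y (hy : 0 < y)
    rw [norm_mul, Real.norm_eq_abs (g _)]
    exact mul_le_mul_of_nonneg_left (hB _ (mul_pos hh hy).le) (norm_nonneg _)
  · filter_upwards [ae_restrict_mem measurableSet_Ioi] with y (hy : 0 < y)
    have hscale : Tendsto (fun h => h * y) (𝓝[>] 0) (𝓝[Ici 0] 0) :=
      tendsto_nhdsWithin_of_tendsto_nhds_of_eventually_within _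
        (((continuous_mul_const y).tendsto' 0 0 (zero_mul y)).mono_left nhdsWithin_le_nhds)
        (by filter_upwards [self_mem_nhdsWithin] with h (hh : 0 < h) using (mul_pos hh hy).le)
    exact ((hg 0 self_mem_Ici).tendsto.comp hscale).const_mul (K y)

/-- paper's Example 4.1. For bounded continuous densities
`f₁, …, f_k` on the `k` legs of the `k`-spider agreeing at the origin with value `v`,
the Gaussian-type kernel-smoothed density at the origin converges, as the bandwidth
`h → 0⁺`, to `v · (k/(k−2)) · log(k/2)`, exhibiting the boundary bias. -/
theorem stmt9 (k : ℕ) (hk : 3 ≤ k) (v : ℝ) (f : Fin k → ℝ → ℝ)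
    (hcont : ∀ l, ContinuousOn (f l) (Set.Ici 0))
    (hbdd : ∀ l, ∃ B : ℝ, ∀ x ∈ Set.Ici (0 : ℝ), |f l x| ≤ B)
    (h0 : ∀ l, f l 0 = v) :
    Filter.Tendsto
      (fun h : ℝ => ∑ l : Fin k, ∫ y in Set.Ioi (0 : ℝ),
        stdNormalPDF y / (1 + ((k : ℝ) - 2) * stdNormalCDF (-y)) * f l (h * y))
      (nhdsWithin 0 (Set.Ioi 0))
      (nhds (v * ((k : ℝ) / ((k : ℝ) - 2)) * Real.log ((k : ℝ) / 2))) := by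
  have hc : (0 : ℝ) < k - 2 := by
    have : (3 : ℝ) ≤ k := by exact_mod_cast hk
    linarith
  have hleg (l : Fin k) : Tendsto (fun h => ∫ y in Ioi 0, spiderKernel (k - 2) y * f l (h * y))
      (𝓝[>] 0) (𝓝 (((k : ℝ) - 2)⁻¹ * Real.log (1 + ((k : ℝ) - 2) / 2) * v)) := by
    obtain ⟨B, hB⟩ := hbdd l
    simpa only [integral_spiderKernel hc, h0 l] using
      tendsto_setIntegral_mul_comp_mul_nhdsGT_zero (integrableOn_spiderKernel hc) (hcont l) hB
  have hlim : v * ((k : ℝ) / ((k : ℝ) - 2)) * Real.log ((k : ℝ) / 2)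
      = ∑ _l : Fin k, ((k : ℝ) - 2)⁻¹ * Real.log (1 + ((k : ℝ) - 2) / 2) * v := by
    rw [Finset.sum_const, Finset.card_univ, Fintype.card_fin, nsmul_eq_mul]
    field_simp
    ring_nf
  rw [hlim]
  exact tendsto_finsetSum _ fun l _ => hleg l
end

section
/- Let p ≥ 1, let Q be a Borel probability measure on ℝᵖ that is absolutely continuous with respect to Lebesgue measure, let y ∈ ℝᵖ, and let c > 0 be such that Q({x : ⟨u, x − y⟩ ≥ 0}) ≥ c for every unit vector u. Then every closed convex set C ⊆ ℝᵖ with Q(C) > 1 − c contains y in its interior. -/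
open MeasureTheory

/-!
The frontier of a convex set is Lebesgue-null, so `Q C = Q (interior C)`. If `y` is not in the
open convex set `interior C`, a separating hyperplane through `y` puts `interior C` inside an open
halfspace whose complement, a closed halfspace through `y`, has `Q`-measure at least `c`.
-/

section Halfspace

variable {E : Type*} [NormedAddCommGroup E] [InnerProductSpace ℝ E]

theorem exists_norm_eq_one_inner_sub_neg_of_notMem [CompleteSpace E] {s : Set E}
    (hs : Convex ℝ s) (hso : IsOpen s) (hne : s.Nonempty) {y : E} (hy : y ∉ s) :
    ∃ u : E, ‖u‖ = 1 ∧ ∀ x ∈ s, inner ℝ u (x - y) < 0 := by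
  obtain ⟨f, hf⟩ := geometric_hahn_banach_open_point hs hso hy
  set v : E := (InnerProductSpace.toDual ℝ E).symm f
  have hv : ∀ x, inner ℝ v x = f x := fun x => InnerProductSpace.toDual_symm_apply
  have hv0 : v ≠ 0 := by
    obtain ⟨x₀, hx₀⟩ := hne
    rintro h
    have := hf x₀ hx₀
    rw [← hv, ← hv, h, inner_zero_left, inner_zero_left] at this
    exact lt_irrefl _ this
  refine ⟨‖v‖⁻¹ • v, norm_smul_inv_norm hv0, fun x hx => ?_⟩
  rw [real_inner_smul_left, hv, map_sub]
  exact mul_neg_of_pos_of_neg (inv_pos.2 (norm_pos_iff.2 hv0)) (sub_neg.2 (hf x hx))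

variable [CompleteSpace E] [MeasurableSpace E] [OpensMeasurableSpace E]

theorem exists_measure_le_one_sub_measure_halfspace {s : Set E} (hs : Convex ℝ s)
    (hso : IsOpen s) (hne : s.Nonempty) {y : E} (hy : y ∉ s)
    (Q : Measure E) [IsProbabilityMeasure Q] :
    ∃ u : E, ‖u‖ = 1 ∧ Q s ≤ 1 - Q {x | 0 ≤ inner ℝ u (x - y)} := by
  obtain ⟨u, hu, hneg⟩ := exists_norm_eq_one_inner_sub_neg_of_notMem hs hso hne hy
  have hmeas : MeasurableSet {x : E | 0 ≤ inner ℝ u (x - y)} :=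
    (isClosed_le continuous_const (by fun_prop)).measurableSet
  refine ⟨u, hu, ?_⟩
  rw [← prob_compl_eq_one_sub hmeas]
  exact measure_mono fun x hx => not_le.2 (hneg x hx)

end Halfspace

theorem ENNReal.one_sub_ofReal_le_ofReal_one_sub (c : ℝ) :
    1 - ENNReal.ofReal c ≤ ENNReal.ofReal (1 - c) := by
  rw [tsub_le_iff_right, ← ENNReal.ofReal_one]
  calc ENNReal.ofReal 1 = ENNReal.ofReal (1 - c + c) := by rw [sub_add_cancel]
    _ ≤ ENNReal.ofReal (1 - c) + ENNReal.ofReal c := ENNReal.ofReal_add_le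

theorem stmt14_general (p : ℕ)
    (Q : Measure (EuclideanSpace ℝ (Fin p))) [IsProbabilityMeasure Q]
    (habs : Q ≪ volume)
    (y : EuclideanSpace ℝ (Fin p))
    (c : ℝ)
    (hhalf : ∀ u : EuclideanSpace ℝ (Fin p), ‖u‖ = 1 →
      ENNReal.ofReal c ≤ Q {x | 0 ≤ (inner ℝ u (x - y) : ℝ)})
    (C : Set (EuclideanSpace ℝ (Fin p)))
    (hCconv : Convex ℝ C)
    (hCQ : ENNReal.ofReal (1 - c) < Q C) :
    y ∈ interior C := by
  by_contra hy
  rw [← measure_interior_of_null_frontier (habs (hCconv.addHaar_frontier volume))] at hCQ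
  obtain hempty | hne := (interior C).eq_empty_or_nonempty
  · simp [hempty] at hCQ
  obtain ⟨u, hu, hle⟩ :=
    exists_measure_le_one_sub_measure_halfspace hCconv.interior isOpen_interior hne hy Q
  have hCQ_le : Q (interior C) ≤ ENNReal.ofReal (1 - c) :=
    calc Q (interior C) ≤ 1 - Q {x | 0 ≤ inner ℝ u (x - y)} := hle
      _ ≤ 1 - ENNReal.ofReal c := tsub_le_tsub_left (hhalf u hu) 1
      _ ≤ ENNReal.ofReal (1 - c) := ENNReal.one_sub_ofReal_le_ofReal_one_sub c
  exact (hCQ.trans_le hCQ_le).false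

/-- a step in the proof of the paper's Lemma 3.1. If every closed
halfspace through `y` has `Q`-measure at least `c > 0`, then every closed convex set
of `Q`-measure greater than `1 − c` contains `y` in its interior. -/
theorem stmt14 (p : ℕ) (hp : 1 ≤ p)
    (Q : Measure (EuclideanSpace ℝ (Fin p))) [IsProbabilityMeasure Q]
    (habs : Q ≪ volume)
    (y : EuclideanSpace ℝ (Fin p))
    (c : ℝ) (hc : 0 < c)
    (hhalf : ∀ u : EuclideanSpace ℝ (Fin p), ‖u‖ = 1 →
      ENNReal.ofReal c ≤ Q {x | 0 ≤ (inner ℝ u (x - y) : ℝ)})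
    (C : Set (EuclideanSpace ℝ (Fin p)))
    (hCcl : IsClosed C) (hCconv : Convex ℝ C)
    (hCQ : ENNReal.ofReal (1 - c) < Q C) :
    y ∈ interior C :=
  stmt14_general p Q habs y c hhalf C hCconv hCQ
end

section
/- Let x̃₀, …, x̃_m be points of ℝᵖ, let Δ̃ be the convex hull of {x̃₀, …, x̃_m}, and for each k = 0, …, m let Δ_k := {2x̃_k − x : x ∈ Δ̃} be the reflection of Δ̃ through x̃_k. If x*_k ∈ Δ_k for each k = 0, …, m, then Δ̃ ⊆ conv{x*_0, …, x*_m}. -/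
/-!
Separate a point `z` of `Δ̃` from a closed convex set `C` meeting every `Δₖ` by a continuous
functional `f`, and let `x̃ₖ` maximize `f` over the vertices, hence over `Δ̃`. A point
`2x̃ₖ - y` of `Δₖ ∩ C` then has `f (2x̃ₖ - y) = 2 f x̃ₖ - f y ≥ f x̃ₖ ≥ f z`, so it lies on
the wrong side of the separating hyperplane.
-/

open Set

theorem exists_forall_mem_convexHull_range_le {𝕜 E ι : Type*} [Field 𝕜] [LinearOrder 𝕜]
    [IsStrictOrderedRing 𝕜] [AddCommGroup E] [Module 𝕜 E] [Finite ι] [Nonempty ι]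
    (f : E →ₗ[𝕜] 𝕜) (x : ι → E) : ∃ k, ∀ w ∈ convexHull 𝕜 (range x), f w ≤ f (x k) := by
  obtain ⟨k, hk⟩ := Finite.exists_max (f ∘ x)
  refine ⟨k, fun w hw => convexHull_min ?_ (convex_halfSpace_le f.isLinear _) hw⟩
  rintro _ ⟨j, rfl⟩
  exact hk j

theorem convexHull_range_subset_of_forall_reflection_inter_nonempty {E ι : Type*}
    [TopologicalSpace E] [AddCommGroup E] [IsTopologicalAddGroup E] [Module ℝ E]
    [ContinuousSMul ℝ E] [LocallyConvexSpace ℝ E] [Finite ι] {C : Set E}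
    (hC : Convex ℝ C) (hC' : IsClosed C) (x : ι → E)
    (hmeet : ∀ k, (C ∩ (fun y => (2 : ℝ) • x k - y) '' convexHull ℝ (range x)).Nonempty) :
    convexHull ℝ (range x) ⊆ C := by
  intro z hz
  by_contra hzC
  obtain ⟨f, u, hfC, hfz⟩ := geometric_hahn_banach_closed_point hC hC' hzC
  have : Nonempty ι := range_nonempty_iff_nonempty.mp (convexHull_nonempty_iff.mp ⟨z, hz⟩)
  obtain ⟨k, hk⟩ := exists_forall_mem_convexHull_range_le (f : E →ₗ[ℝ] ℝ) x
  simp only [ContinuousLinearMap.coe_coe] at hk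
  obtain ⟨_, hcC, y, hy, rfl⟩ := hmeet k
  have hreflect : f ((2 : ℝ) • x k - y) = 2 * f (x k) - f y := by simp
  linarith [hfC _ hcC, hk y hy, hk z hz]

/-- key convex-geometry step in the proofs of the paper's Lemma A.5
and Lemma A.6'. Let `Δ̃` be the convex hull of points `x̃₀, …, x̃_m` of `ℝᵖ`, and let
`Δ_k` be the reflection of `Δ̃` through `x̃_k`. If `x*_k ∈ Δ_k` for each `k`, then
`Δ̃ ⊆ conv{x*₀, …, x*_m}`. -/
theorem stmt16 (p m : ℕ)
    (xt : Fin (m + 1) → EuclideanSpace ℝ (Fin p))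
    (xs : Fin (m + 1) → EuclideanSpace ℝ (Fin p))
    (hxs : ∀ k : Fin (m + 1),
      xs k ∈ (fun x => (2 : ℝ) • xt k - x) '' (convexHull ℝ (Set.range xt))) :
    convexHull ℝ (Set.range xt) ⊆ convexHull ℝ (Set.range xs) :=
  convexHull_range_subset_of_forall_reflection_inter_nonempty (convex_convexHull ℝ _)
    ((finite_range xs).isCompact_convexHull (𝕜 := ℝ)).isClosed xt
    fun k => ⟨xs k, subset_convexHull ℝ _ ⟨k, rfl⟩, hxs k⟩
end
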